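/- arXiv:alg-geom/9703002 — 6 statements merged into one kernel-verified Lean document; each statement's English description precedes it below -/
import Mathlib

section
/- The group G generated by two elements a, b subject to the relations a^3 = b^3 = (ab)^3 = 1 is infinite. -/
/-!
Let `ω` be a primitive cube root of unity in `ℂ`. The rotation `a : z ↦ ω z` and the rotation
`b : z ↦ ω z + 1` about another centre satisfy `a³ = b³ = (ab)³ = 1`, since `ab` is again a
rotation by `ω² ≠ 1`. Hence they define an action of the group on `ℂ`, in which `a⁻¹ b` acts as
the translation by `ω⁻¹ ≠ 0`. So `a⁻¹ b` has infinite order.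
-/

/-- The relators `a^3, b^3, (ab)^3` in the free group on two generators. -/
def rels2 : Set (FreeGroup (Fin 2)) :=
  {(FreeGroup.of 0) ^ 3, (FreeGroup.of 1) ^ 3, (FreeGroup.of 0 * FreeGroup.of 1) ^ 3}

lemma Equiv.not_isOfFinOrder_addRight {M : Type*} [AddGroup M] {c : M}
    (hc : ¬IsOfFinAddOrder c) : ¬IsOfFinOrder (Equiv.addRight c) := by
  rw [← injective_pow_iff_not_isOfFinOrder]
  rw [← injective_nsmul_iff_not_isOfFinAddOrder] at hc
  intro m n h
  apply hc
  simpa using congrArg (· 0) h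

lemma IsPrimitiveRoot.sq_add_self_add_one {R : Type*} [CommRing R] [IsDomain R] {ω : R}
    (hω : IsPrimitiveRoot ω 3) : ω ^ 2 + ω + 1 = 0 := by
  have h := hω.geom_sum_eq_zero (by norm_num)
  simp only [Finset.sum_range_succ, Finset.sum_range_zero] at h
  linear_combination h

namespace AffineRepresentation

variable {K : Type*} [Field K] {ω : K}

def rotation (hω : IsPrimitiveRoot ω 3) : Equiv.Perm K :=
  Equiv.mulLeft₀ ω (hω.ne_zero three_ne_zero)

def generators (hω : IsPrimitiveRoot ω 3) : Fin 2 → Equiv.Perm K :=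
  ![rotation hω, Equiv.addRight 1 * rotation hω]

lemma lift_generators_eq_one (hω : IsPrimitiveRoot ω 3) :
    ∀ r ∈ rels2, FreeGroup.lift (generators hω) r = 1 := by
  have h3 := hω.pow_eq_one
  have h2 := hω.sq_add_self_add_one
  rintro r (rfl | rfl | rfl) <;> ext z <;> simp [generators, rotation, pow_succ]
  · linear_combination z * h3
  · linear_combination z * h3 + h2
  · linear_combination z * (ω ^ 3 + 1) * h3 + ω * (ω ^ 2 - ω + 1) * h2

def hom (hω : IsPrimitiveRoot ω 3) : PresentedGroup rels2 →* Equiv.Perm K :=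
  PresentedGroup.toGroup (lift_generators_eq_one hω)

lemma hom_inv_of_mul_of (hω : IsPrimitiveRoot ω 3) :
    hom hω ((PresentedGroup.of 0)⁻¹ * PresentedGroup.of 1) = Equiv.addRight ω⁻¹ := by
  have hω₀ := hω.ne_zero three_ne_zero
  ext z
  simp [hom, generators, rotation]
  field_simp

end AffineRepresentation

lemma not_isOfFinOrder_inv_of_mul_of :
    ¬IsOfFinOrder ((PresentedGroup.of 0 : PresentedGroup rels2)⁻¹ * PresentedGroup.of 1) := by
  have hω := Complex.isPrimitiveRoot_exp 3 three_ne_zero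
  intro h
  have h' := (AffineRepresentation.hom hω).isOfFinOrder h
  rw [AffineRepresentation.hom_inv_of_mul_of] at h'
  exact Equiv.not_isOfFinOrder_addRight
    (not_isOfFinAddOrder_of_isAddTorsionFree (inv_ne_zero (hω.ne_zero three_ne_zero))) h'

/-- The group `⟨a, b | a^3 = b^3 = (ab)^3 = 1⟩` is infinite. -/
theorem stmt_2 : Infinite (PresentedGroup rels2) :=
  not_finite_iff_infinite.mp fun _ => not_isOfFinOrder_inv_of_mul_of (isOfFinOrder_of_finite _)
end

section
/- The group ⟨a, b | a^3 = b^3 = (ab)^3 = 1⟩ has an infinite quotient: it surjects onto the group of affine transformations of the plane generated by two rotations of order 3 about distinct centers, and this image group is infinite. -/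
open Finset

namespace AffineEquiv

section ScalarLinearPart

variable {R V P : Type*} [Ring R] [AddCommGroup V] [Module R V] [AddTorsor V P]
  {f : P ≃ᵃ[R] P} {c : R}

theorem pow_apply_of_linear_eq_smul (hf : ∀ v, f.linear v = c • v) (n : ℕ) (x : P) :
    (f ^ n) x = (∑ i ∈ range n, c ^ i) • (f x -ᵥ x) +ᵥ x := by
  induction n with
  | zero => simp
  | succ n ih =>
    rw [pow_succ', coe_mul, Function.comp_apply, ih, f.map_vadd, hf, eq_vadd_iff_vsub_eq,
      vadd_vsub_assoc, geom_sum_succ, add_smul, mul_smul, one_smul]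

theorem pow_eq_one_of_linear_eq_smul (hf : ∀ v, f.linear v = c • v) {n : ℕ}
    (hc : ∑ i ∈ range n, c ^ i = 0) : f ^ n = 1 := by
  ext x
  rw [pow_apply_of_linear_eq_smul hf, hc, zero_smul, zero_vadd, coe_one, id]

end ScalarLinearPart

section Homothety

variable {R V P : Type*} [CommRing R] [AddCommGroup V] [Module R V] [AddTorsor V P]

theorem linear_homothetyUnitsMulHom_apply (p : P) (u : Rˣ) (v : V) :
    (homothetyUnitsMulHom p u).linear v = (u : R) • v := by
  change (AffineMap.homothety p (u : R)).linear v = _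
  rw [AffineMap.homothety_linear]
  rfl

theorem homothetyUnitsMulHom_mul_inv (p q : P) (u : Rˣ) :
    homothetyUnitsMulHom p u * (homothetyUnitsMulHom q u)⁻¹ =
      constVAdd R P ((1 - (u : R)) • (p -ᵥ q)) := by
  ext x
  rw [coe_mul, inv_def, Function.comp_apply, coe_homothetyUnitsMulHom_apply,
    coe_homothetyUnitsMulHom_apply_symm, constVAdd_apply, AffineMap.homothety_apply,
    AffineMap.homothety_apply, vadd_vsub_assoc, smul_add, smul_smul, Units.mul_inv, one_smul,
    ← vsub_add_vsub_cancel x p q, ← neg_vsub_eq_vsub_rev p q]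
  conv_rhs => rw [← vsub_vadd x p, vadd_vadd]
  congr 1
  module

end Homothety

theorem not_isOfFinOrder_constVAdd {k V P : Type*} [Ring k] [AddCommGroup V] [Module k V]
    [AddTorsor V P] [Nonempty P] [IsAddTorsionFree V] {v : V} (hv : v ≠ 0) :
    ¬IsOfFinOrder (constVAdd k P v) := by
  have hinj : Function.Injective (constVAddHom k P) := by
    intro v w h
    obtain ⟨p⟩ := ‹Nonempty P›
    exact vadd_right_cancel (G := V) p (congrArg (· p) h)
  change ¬IsOfFinOrder (constVAddHom k P (.ofAdd v))
  rw [hinj.isOfFinOrder_iff, isOfFinOrder_ofAdd_iff]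
  exact not_isOfFinAddOrder_of_isAddTorsionFree hv

end AffineEquiv

theorem Subgroup.infinite_of_not_isOfFinOrder {G : Type*} [Group G] {H : Subgroup G} {g : G}
    (hgH : g ∈ H) (hg : ¬IsOfFinOrder g) : Infinite H :=
  Infinite.of_injective (fun n : ℤ => (⟨g, hgH⟩ : H) ^ n) fun _ _ h =>
    injective_zpow_iff_not_isOfFinOrder.mpr hg (congrArg Subtype.val h)

theorem PresentedGroup.range_toGroup {α G : Type*} [Group G] {f : α → G}
    {rels : Set (FreeGroup α)} (h : ∀ r ∈ rels, FreeGroup.lift f r = 1) :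
    (toGroup h).range = Subgroup.closure (Set.range f) := by
  rw [MonoidHom.range_eq_map, ← closure_range_of, MonoidHom.map_closure, ← Set.range_comp]
  congr 2
  ext x
  exact toGroup.of h

open AffineEquiv

/-- The group `⟨a, b | a^3 = b^3 = (ab)^3 = 1⟩` has an infinite quotient: it
surjects onto the group of affine transformations of the plane generated by two rotations of
order 3 (rotation by a primitive cube root of unity) about distinct centers `p₁ ≠ p₂`, and this
image group is infinite. -/
theorem stmt_4 (p₁ p₂ : ℂ) (hp : p₁ ≠ p₂) (ω : ℂ) (hω1 : ω ≠ 1) (hω3 : ω ^ 3 = 1) :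
    ∃ g₁ g₂ : ℂ ≃ᵃ[ℂ] ℂ,
      (∀ z, g₁ z = ω * (z - p₁) + p₁) ∧
      (∀ z, g₂ z = ω * (z - p₂) + p₂) ∧
      ∃ φ : PresentedGroup rels2 →* (ℂ ≃ᵃ[ℂ] ℂ),
        φ (PresentedGroup.of 0) = g₁ ∧ φ (PresentedGroup.of 1) = g₂ ∧
        φ.range = Subgroup.closure {g₁, g₂} ∧
        Infinite (Subgroup.closure ({g₁, g₂} : Set (ℂ ≃ᵃ[ℂ] ℂ))) := by
  have hprim : IsPrimitiveRoot ω 3 :=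
    IsPrimitiveRoot.iff_orderOf.mpr (orderOf_eq_prime hω3 hω1)
  set u : ℂˣ := (hprim.isUnit three_ne_zero).unit
  set g₁ := homothetyUnitsMulHom p₁ u
  set g₂ := homothetyUnitsMulHom p₂ u
  have hω : ∑ i ∈ range 3, ω ^ i = 0 := hprim.geom_sum_eq_zero (by norm_num)
  have hω2 : ∑ i ∈ range 3, (ω * ω) ^ i = 0 := by
    rw [← sq]
    exact (hprim.pow_of_coprime 2 (by norm_num)).geom_sum_eq_zero (by norm_num)
  have hrels : ∀ r ∈ rels2, FreeGroup.lift ![g₁, g₂] r = 1 := by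
    rintro r (rfl | rfl | rfl) <;>
      simp only [map_pow, map_mul, FreeGroup.lift_apply_of, Matrix.cons_val_zero,
        Matrix.cons_val_one]
    · exact pow_eq_one_of_linear_eq_smul (linear_homothetyUnitsMulHom_apply p₁ u) hω
    · exact pow_eq_one_of_linear_eq_smul (linear_homothetyUnitsMulHom_apply p₂ u) hω
    · refine pow_eq_one_of_linear_eq_smul (fun v => ?_) hω2
      change g₁.linear (g₂.linear v) = _
      rw [linear_homothetyUnitsMulHom_apply, linear_homothetyUnitsMulHom_apply, smul_smul]
      rfl
  refine ⟨g₁, g₂, fun z => ?_, fun z => ?_, PresentedGroup.toGroup hrels,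
    PresentedGroup.toGroup.of hrels, PresentedGroup.toGroup.of hrels, ?_, ?_⟩
  · exact AffineMap.homothety_apply p₁ ω z
  · exact AffineMap.homothety_apply p₂ ω z
  · rw [PresentedGroup.range_toGroup, Matrix.range_cons_cons_empty]
  · refine Subgroup.infinite_of_not_isOfFinOrder (g := g₁ * g₂⁻¹)
      (mul_mem (Subgroup.subset_closure (by simp)) (inv_mem (Subgroup.subset_closure (by simp))))
      ?_
    rw [homothetyUnitsMulHom_mul_inv]
    exact not_isOfFinOrder_constVAdd
      (smul_ne_zero (sub_ne_zero.mpr hω1.symm) (sub_ne_zero.mpr hp))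
end

section
/- Let G be a group generated by a finite set S such that every subset of S with at most 4 elements generates a subgroup of exponent 3. Then G has exponent 3. -/
/-!
In a group of exponent 3 every element commutes with its conjugates, so the normal closure `N`
of an element `x` is abelian of exponent 3. Conjugation turns `Additive N` into a representation
`ρ` with `(ρ g - 1) ^ 2 = ρ g ^ 2 + ρ g + 1 = 0`, and a ring computation using `3 = 0` kills every
product `(ρ g - 1) (ρ h - 1) (ρ k - 1)`. As `⁅m, g⁆` corresponds to `(1 - ρ g) m`, groups of
exponent 3 are nilpotent of class at most 3 (and 2-Engel).

In `G`, the class-3 relation on four generators makes every `⁅⁅a, b⁆, c⁆` central, hence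
multiplicative in each argument. The 2-Engel law `⁅⁅x, y⁆, y⁆ = 1` and its polarization then
spread from generators to all of `G`, and in a 2-Engel group
`(x y) ^ 3 = ⁅x, y⁆⁻¹ ^ 3 x ^ 3 y ^ 3` with `⁅x, y⁆ ^ 3 = ⁅x ^ 3, y⁆`, so cubes of products of
elements of exponent 3 are trivial.
-/

open scoped commutatorElement IsMulCommutative
open Subgroup

theorem mul_add_mul_add_mul_mul_eq_zero {R : Type*} [Ring R] {a b : R} (ha : a ^ 2 = 0)
    (hb : b ^ 2 = 0) (hab : (a + b + a * b) ^ 2 = 0) :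
    a * b + b * a + a * b * a = 0 := by
  have h₁ : a * b + b * a + b * a * b + a * b * a + a * b * a * b = 0 := by
    calc _ = (a + b + a * b) ^ 2 - (a ^ 2 + a ^ 2 * b + b ^ 2 + a * b ^ 2) := by noncomm_ring
      _ = 0 := by simp [hab, ha, hb]
  have h₂ : b * a * b + a * b * a * b = 0 := by
    calc _ = (a * b + b * a + b * a * b + a * b * a + a * b * a * b) * b
          - (a + b * a + a * b * a) * b ^ 2 := by noncomm_ring
      _ = 0 := by simp [h₁, hb]
  calc a * b + b * a + a * b * a
      = (a * b + b * a + b * a * b + a * b * a + a * b * a * b) - (b * a * b + a * b * a * b) := by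
        noncomm_ring
    _ = 0 := by rw [h₁, h₂, sub_zero]

namespace MonoidHom

variable {M R : Type*} [Monoid M] [Ring R] (ρ : M →* R) (hρ : ∀ g, (ρ g - 1) ^ 2 = 0)
include hρ

theorem sub_one_mul_sub_one_add_mul_mul_eq_zero (g h : M) :
    (ρ g - 1) * (ρ h - 1) + (ρ h - 1) * (ρ g - 1) + (ρ g - 1) * (ρ h - 1) * (ρ g - 1) = 0 := by
  refine mul_add_mul_add_mul_mul_eq_zero (hρ g) (hρ h) ?_
  rw [← hρ (g * h), map_mul]
  noncomm_ring

theorem sub_one_mul_sub_one_mul_sub_one_add_eq_zero (g h k : M) :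
    (ρ g - 1) * (ρ h - 1) * (ρ k - 1) + (ρ h - 1) * (ρ k - 1) * (ρ g - 1) = 0 := by
  have hbc : ρ (h * k) - 1 = (ρ h - 1) + (ρ k - 1) + (ρ h - 1) * (ρ k - 1) := by
    rw [map_mul]; noncomm_ring
  set a := ρ g - 1
  set b := ρ h - 1
  set c := ρ k - 1
  have hlinearized : a * (b * c) + b * c * a + a * (b * c) * a = 0 := by
    have := sub_one_mul_sub_one_add_mul_mul_eq_zero ρ hρ g (h * k)
    rw [hbc] at this
    calc _ = (a * (b + c + b * c) + (b + c + b * c) * a + a * (b + c + b * c) * a)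
          - (a * b + b * a + a * b * a) - (a * c + c * a + a * c * a) := by noncomm_ring
      _ = 0 := by
        rw [this, sub_one_mul_sub_one_add_mul_mul_eq_zero ρ hρ g h,
          sub_one_mul_sub_one_add_mul_mul_eq_zero ρ hρ g k]
        simp
  have hsandwich : a * (b * c) * a = 0 := by
    calc _ = a * (a * (b * c) + b * c * a + a * (b * c) * a) - a ^ 2 * (b * c)
          - a ^ 2 * (b * c) * a := by noncomm_ring
      _ = 0 := by simp [hlinearized, hρ g, a]
  calc _ = a * (b * c) + b * c * a + a * (b * c) * a - a * (b * c) * a := by noncomm_ring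
    _ = 0 := by rw [hlinearized, hsandwich, sub_zero]

theorem sub_one_mul_sub_one_mul_sub_one_eq_zero (h3 : (3 : R) = 0) (g h k : M) :
    (ρ g - 1) * (ρ h - 1) * (ρ k - 1) = 0 := by
  have e₁ := sub_one_mul_sub_one_mul_sub_one_add_eq_zero ρ hρ g h k
  have e₂ := sub_one_mul_sub_one_mul_sub_one_add_eq_zero ρ hρ h k g
  have e₃ := sub_one_mul_sub_one_mul_sub_one_add_eq_zero ρ hρ k g h
  set a := ρ g - 1
  set b := ρ h - 1
  set c := ρ k - 1
  -- `a b c = -(b c a) = c a b = -(a b c)`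
  calc a * b * c = 3 * (a * b * c) - ((a * b * c + b * c * a) - (b * c * a + c * a * b)
        + (c * a * b + a * b * c)) := by noncomm_ring
    _ = 0 := by rw [h3, e₁, e₂, e₃]; simp

end MonoidHom

theorem Module.End.three_eq_zero_of_pow_three {A : Type*} [CommGroup A]
    (h3 : ∀ a : A, a ^ 3 = 1) :
    (3 : Module.End ℤ (Additive A)) = 0 :=
  LinearMap.ext fun a => Additive.toMul.injective (by simpa using h3 a.toMul)

section CentralCommutators

variable {G : Type*} [Group G]

theorem commutatorElement_mul_right_of_mem_center {u c d : G} (hd : ⁅u, d⁆ ∈ center G) :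
    ⁅u, c * d⁆ = ⁅u, c⁆ * ⁅u, d⁆ := by
  rw [commutatorElement_mul_right_eq_mul_conj, mul_assoc _ c, mem_center_iff.mp hd c]
  group

theorem commutatorElement_mul_left_of_mem_center {u v c : G} (hv : ⁅v, c⁆ ∈ center G) :
    ⁅u * v, c⁆ = ⁅u, c⁆ * ⁅v, c⁆ := by
  rw [commutatorElement_mul_left_eq_conj_mul, mem_center_iff.mp hv u, mul_inv_cancel_right]
  exact (mem_center_iff.mp hv _).symm

theorem commutatorElement_center_mul {z : G} (hz : z ∈ center G) (u c : G) :
    ⁅z * u, c⁆ = ⁅u, c⁆ := by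
  rw [commutatorElement_mul_left_eq_conj_mul, ← mem_center_iff.mp hz,
    (commutatorElement_eq_one_iff_mul_comm.mpr (mem_center_iff.mp hz c).symm)]
  group

theorem commutatorElement_conj_left {a u : G} (hau : ⁅a, u⁆ ∈ center G) (c : G) :
    ⁅a * u * a⁻¹, c⁆ = ⁅u, c⁆ := by
  rw [← MulAut.conj_apply, conj_eq_commutatorElement_mul, commutatorElement_center_mul hau]

variable (hc : ∀ a b c : G, ⁅⁅a, b⁆, c⁆ ∈ center G)
include hc

theorem commutatorElement_commutatorElement_conj_left (g a b c : G) :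
    ⁅g * ⁅a, b⁆ * g⁻¹, c⁆ = ⁅⁅a, b⁆, c⁆ :=
  commutatorElement_conj_left (by rw [← commutatorElement_inv]; exact inv_mem (hc a b g)) c

theorem commutatorElement_commutatorElement_mul_left (a a' b c : G) :
    ⁅⁅a * a', b⁆, c⁆ = ⁅⁅a, b⁆, c⁆ * ⁅⁅a', b⁆, c⁆ := by
  rw [commutatorElement_mul_left_eq_conj_mul, commutatorElement_mul_left_of_mem_center (hc a b c),
    commutatorElement_commutatorElement_conj_left hc, mem_center_iff.mp (hc a b c)]

theorem commutatorElement_commutatorElement_mul_mid (a b b' c : G) :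
    ⁅⁅a, b * b'⁆, c⁆ = ⁅⁅a, b⁆, c⁆ * ⁅⁅a, b'⁆, c⁆ := by
  have hconj := commutatorElement_commutatorElement_conj_left hc b a b' c
  rw [commutatorElement_mul_right_eq_mul_conj, mul_assoc _ b, mul_assoc,
    commutatorElement_mul_left_of_mem_center (hconj ▸ hc a b' c), hconj]

theorem commutatorElement_commutatorElement_mul_right (a b c d : G) :
    ⁅⁅a, b⁆, c * d⁆ = ⁅⁅a, b⁆, c⁆ * ⁅⁅a, b⁆, d⁆ :=
  commutatorElement_mul_right_of_mem_center (hc a b d)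

def tripleCommutator : G →* G →* G →* center G :=
  .mk' (fun a => .mk' (fun b => .mk' (fun c => ⟨⁅⁅a, b⁆, c⁆, hc a b c⟩)
    fun c d => Subtype.ext (commutatorElement_commutatorElement_mul_right hc a b c d))
    fun b b' => by ext c; exact commutatorElement_commutatorElement_mul_mid hc a b b' c)
    fun a a' => by ext b c; exact commutatorElement_commutatorElement_mul_left hc a a' b c

@[simp]
theorem coe_tripleCommutator (a b c : G) : (tripleCommutator hc a b c : G) = ⁅⁅a, b⁆, c⁆ := rfl

end CentralCommutators

section TwoEngel

variable {G : Type*} [Group G]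

theorem commutatorElement_pow_left_of_commute {x y : G} (hx : Commute x ⁅x, y⁆) (n : ℕ) :
    ⁅x ^ n, y⁆ = ⁅x, y⁆ ^ n := by
  induction n with
  | zero => simp
  | succ n ih =>
    rw [pow_succ', commutatorElement_mul_left_eq_conj_mul, ih, (hx.pow_right n).mul_inv_cancel,
      pow_succ]

theorem mul_pow_three_of_commute {x y : G} (hx : Commute x ⁅x, y⁆) (hy : Commute y ⁅x, y⁆) :
    (x * y) ^ 3 = ⁅x, y⁆⁻¹ ^ 3 * x ^ 3 * y ^ 3 := by
  have hyx : ∀ r, y * (x * r) = ⁅x, y⁆⁻¹ * (x * (y * r)) := fun r => by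
    rw [commutatorElement_def]; group
  simp only [pow_three', mul_assoc, hyx, hx.inv_right.left_comm, hy.inv_right.left_comm]

theorem mul_pow_three_eq_one {x y : G} (hxy : ⁅⁅x, y⁆, y⁆ = 1) (hyx : ⁅⁅y, x⁆, x⁆ = 1)
    (hx : x ^ 3 = 1) (hy : y ^ 3 = 1) : (x * y) ^ 3 = 1 := by
  have hxc : Commute x ⁅x, y⁆ := by
    rw [← Commute.inv_right_iff, commutatorElement_inv]
    exact (commutatorElement_eq_one_iff_commute.mp hyx).symm
  have hyc : Commute y ⁅x, y⁆ := (commutatorElement_eq_one_iff_commute.mp hxy).symm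
  rw [mul_pow_three_of_commute hxc hyc, inv_pow, ← commutatorElement_pow_left_of_commute hxc, hx,
    hy]
  simp

end TwoEngel

section AbelianNormal

variable {H : Type*} [Group H] (N : Subgroup H) [N.Normal] [IsMulCommutative N]

abbrev conjRep : Representation ℤ (ConjAct H) (Additive N) :=
  Representation.ofMulDistribMulAction (ConjAct H) N

theorem coe_toMul_one_sub_conjRep_apply (a : Additive N) (g : H) :
    ((Additive.toMul ((1 - conjRep N (ConjAct.toConjAct g)) a) : N) : H) =
      ⁅((Additive.toMul a : N) : H), g⁆ := by
  simp [commutatorElement_def, ConjAct.Subgroup.val_conj_smul, ConjAct.smul_def, div_eq_mul_inv,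
    mul_assoc]

end AbelianNormal

namespace ExponentThree

variable {H : Type*} [Group H] (h3 : ∀ x : H, x ^ 3 = 1)
include h3

theorem conj_mul_self_mul_conj_inv (g x : H) : g * x * g⁻¹ * x * (g⁻¹ * x * g) = 1 :=
  calc _ = g * (x * g⁻¹) ^ 3 * g ^ 2 := by simp only [pow_three', sq]; group
    _ = 1 := by rw [h3, mul_one, ← pow_succ', h3]

theorem commute_conj_inv (g x : H) : Commute x (g⁻¹ * x * g) := by
  have e₁ : x * (g⁻¹ * x * g) = (g * x * g⁻¹)⁻¹ :=
    eq_inv_of_mul_eq_one_right (by simpa [mul_assoc] using conj_mul_self_mul_conj_inv h3 g x)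
  have e₂ : g⁻¹ * x * g * x = (g * x * g⁻¹)⁻¹ :=
    eq_inv_of_mul_eq_one_left (by simpa [mul_assoc] using conj_mul_self_mul_conj_inv h3 g⁻¹ x)
  exact e₁.trans e₂.symm

theorem commutatorElement_commutatorElement_self_eq_one (x y : H) : ⁅⁅x, y⁆, y⁆ = 1 := by
  have hconj : Commute y (x * y * x⁻¹) := by simpa using commute_conj_inv h3 x⁻¹ y
  exact commutatorElement_eq_one_iff_commute.mpr (hconj.mul_right (Commute.refl y).inv_right).symm

theorem isMulCommutative_normalClosure (x : H) :
    IsMulCommutative (normalClosure ({x} : Set H)) := by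
  refine isMulCommutative_closure fun a ha b hb => ?_
  obtain ⟨_, hx, hxa⟩ := Group.mem_conjugatesOfSet_iff.mp ha
  obtain ⟨_, hx', hxb⟩ := Group.mem_conjugatesOfSet_iff.mp hb
  obtain ⟨c, rfl⟩ := isConj_iff.mp (Set.mem_singleton_iff.mp hx ▸ hxa)
  obtain ⟨d, rfl⟩ := isConj_iff.mp (Set.mem_singleton_iff.mp hx' ▸ hxb)
  have := (Commute.conj_iff c).mpr (commute_conj_inv h3 (d⁻¹ * c) x)
  rwa [show c * ((d⁻¹ * c)⁻¹ * x * (d⁻¹ * c)) * c⁻¹ = d * x * d⁻¹ by group] at this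

theorem three_eq_zero (N : Subgroup H) [IsMulCommutative N] :
    (3 : Module.End ℤ (Additive N)) = 0 :=
  Module.End.three_eq_zero_of_pow_three fun m => Subtype.ext (by simpa using h3 m)

theorem conjRep_sub_one_sq (N : Subgroup H) [N.Normal] [IsMulCommutative N] (g : ConjAct H) :
    (conjRep N g - 1) ^ 2 = 0 := by
  have hsum : conjRep N g ^ 2 + conjRep N g + 1 = 0 := by
    refine LinearMap.ext fun a => Additive.toMul.injective (Subtype.ext ?_)
    simp [ConjAct.Subgroup.val_conj_smul, ConjAct.smul_def, sq]
    generalize ((Additive.toMul a : N) : H) = m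
    generalize ConjAct.ofConjAct g = k
    calc _ = k * (k * m * k⁻¹ * m * (k⁻¹ * m * k)) * k⁻¹ := by group
      _ = 1 := by rw [conj_mul_self_mul_conj_inv h3]; group
  calc _ = conjRep N g ^ 2 + conjRep N g + 1 - 3 * conjRep N g := by noncomm_ring
    _ = 0 := by
      rw [hsum, three_eq_zero h3]
      simp

theorem commutatorElement_commutatorElement_commutatorElement_eq_one (x y z w : H) :
    ⁅⁅⁅x, y⁆, z⁆, w⁆ = 1 := by
  have := isMulCommutative_normalClosure h3 x
  set N := normalClosure ({x} : Set H)
  have hx : x ∈ N := subset_normalClosure rfl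
  have key : (1 - conjRep N (ConjAct.toConjAct w)) * (1 - conjRep N (ConjAct.toConjAct z)) *
      (1 - conjRep N (ConjAct.toConjAct y)) = 0 := by
    rw [show ∀ a b c : Module.End ℤ (Additive N),
        (1 - a) * (1 - b) * (1 - c) = -((a - 1) * (b - 1) * (c - 1)) by intros; noncomm_ring,
      MonoidHom.sub_one_mul_sub_one_mul_sub_one_eq_zero _ (conjRep_sub_one_sq h3 N)
        (three_eq_zero h3 N), neg_zero]
  calc ⁅⁅⁅x, y⁆, z⁆, w⁆
      = ((Additive.toMul (((1 - conjRep N (ConjAct.toConjAct w)) *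
          (1 - conjRep N (ConjAct.toConjAct z)) * (1 - conjRep N (ConjAct.toConjAct y)))
            (Additive.ofMul ⟨x, hx⟩)) : N) : H) := by
        simp only [Module.End.mul_apply, coe_toMul_one_sub_conjRep_apply]; rfl
    _ = 1 := by rw [key]; simp

theorem commutatorElement_commutatorElement_mul_swap_eq_one (s t u : H) :
    ⁅⁅s, t⁆, u⁆ * ⁅⁅s, u⁆, t⁆ = 1 := by
  have hc (a b c : H) : ⁅⁅a, b⁆, c⁆ ∈ center H := mem_center_iff.mpr fun g =>
    (commutatorElement_eq_one_iff_mul_comm.mp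
      (commutatorElement_commutatorElement_commutatorElement_eq_one h3 a b c g)).symm
  have hengel (a b : H) : tripleCommutator hc a b b = 1 :=
    Subtype.ext (commutatorElement_commutatorElement_self_eq_one h3 a b)
  have := hengel s (t * u)
  simp only [map_mul, MonoidHom.mul_apply, hengel, one_mul, mul_one,
    mul_comm (tripleCommutator hc s u t)] at this
  simpa using congrArg Subtype.val this

end ExponentThree

section Generators

variable {G : Type*} [Group G] {S : Set G} (hS : closure S = ⊤)
include hS

theorem commutatorElement_mem_of_closure_eq_top {N : Subgroup G} [hN : N.Normal] {x : G}
    (hx : ∀ s ∈ S, ⁅x, s⁆ ∈ N) (g : G) : ⁅x, g⁆ ∈ N := by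
  induction (hS ▸ mem_top g : g ∈ closure S) using closure_induction with
  | mem s hs => exact hx s hs
  | one => simp
  | mul a b _ _ ha hb =>
    rw [commutatorElement_mul_right_eq_mul_conj, mul_assoc _ a, mul_assoc]
    exact mul_mem ha (hN.conj_mem _ hb a)
  | inv a _ ha =>
    rw [commutatorElement_inv_right, ← commutatorElement_inv]
    simpa using hN.conj_mem _ (inv_mem ha) a⁻¹

theorem commutatorElement_mem_of_closure_eq_top₂ {N : Subgroup G} [N.Normal]
    (h : ∀ s ∈ S, ∀ t ∈ S, ⁅s, t⁆ ∈ N) (a b : G) : ⁅a, b⁆ ∈ N := by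
  rw [← commutatorElement_inv]
  refine inv_mem (commutatorElement_mem_of_closure_eq_top hS (fun s hs => ?_) a)
  rw [← commutatorElement_inv]
  exact inv_mem (commutatorElement_mem_of_closure_eq_top hS (h s hs) b)

theorem commutatorElement_commutatorElement_mem_center_of_closure_eq_top
    (h : ∀ s ∈ S, ∀ t ∈ S, ∀ u ∈ S, ∀ v ∈ S, ⁅⁅⁅s, t⁆, u⁆, v⁆ = 1) (a b c : G) :
    ⁅⁅a, b⁆, c⁆ ∈ center G := by
  have hcenter : ∀ x : G, (∀ s ∈ S, ⁅x, s⁆ = 1) → x ∈ center G := fun x hx =>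
    mem_center_iff.mpr fun g => (commutatorElement_eq_one_iff_mul_comm.mp <|
      mem_bot.mp (commutatorElement_mem_of_closure_eq_top hS (N := ⊥) hx g)).symm
  have hsecond : ∀ s ∈ S, ∀ t ∈ S, ⁅s, t⁆ ∈ Subgroup.upperCentralSeries G 2 := fun s hs t ht =>
    Subgroup.mem_upperCentralSeries_succ_iff.mpr fun g => by
      rw [Subgroup.upperCentralSeries_one]
      exact commutatorElement_mem_of_closure_eq_top hS
        (fun u hu => hcenter _ (h s hs t ht u hu)) g
  have := Subgroup.mem_upperCentralSeries_succ_iff.mp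
    (commutatorElement_mem_of_closure_eq_top₂ hS hsecond a b) c
  rwa [Subgroup.upperCentralSeries_one] at this

theorem commutatorElement_commutatorElement_self_eq_one_of_closure_eq_top
    (hc : ∀ a b c : G, ⁅⁅a, b⁆, c⁆ ∈ center G) (hengel : ∀ s ∈ S, ∀ t ∈ S, ⁅⁅s, t⁆, t⁆ = 1)
    (hpolar : ∀ s ∈ S, ∀ t ∈ S, ∀ u ∈ S, ⁅⁅s, t⁆, u⁆ * ⁅⁅s, u⁆, t⁆ = 1) (x y : G) :
    ⁅⁅x, y⁆, y⁆ = 1 := by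
  set f := tripleCommutator hc
  have hpolarization : f * MonoidHom.flipHom.comp f = 1 :=
    MonoidHom.eq_of_eqOn_dense hS fun s hs => MonoidHom.eq_of_eqOn_dense hS fun t ht =>
      MonoidHom.eq_of_eqOn_dense hS fun u hu => Subtype.ext (hpolar s hs t ht u hu)
  -- by polarization, `y ↦ f · y y` is multiplicative
  let quadratic : G →* G →* center G := MonoidHom.mk' (fun y => (f.flip y).flip y) fun y y' => by
    ext x
    have hpolar' : f x y y' * f x y' y = 1 := congr($hpolarization x y y')
    simp only [MonoidHom.flip_apply, MonoidHom.mul_apply, map_mul]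
    rw [← mul_one (f x y y * f x y' y'), ← hpolar']
    ac_rfl
  have hquadratic : quadratic = 1 := MonoidHom.eq_of_eqOn_dense hS fun t ht =>
    MonoidHom.eq_of_eqOn_dense hS fun s hs => Subtype.ext (hengel s hs t ht)
  exact congrArg Subtype.val congr($hquadratic y x)

theorem pow_three_eq_one_of_closure_eq_top (hengel : ∀ x y : G, ⁅⁅x, y⁆, y⁆ = 1)
    (h3 : ∀ s ∈ S, s ^ 3 = 1) (x : G) : x ^ 3 = 1 := by
  induction (hS ▸ mem_top x : x ∈ closure S) using closure_induction with
  | mem s hs => exact h3 s hs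
  | one => exact one_pow 3
  | mul a b _ _ ha hb => exact mul_pow_three_eq_one (hengel a b) (hengel b a) ha hb
  | inv a _ ha => rw [inv_pow, ha, inv_one]

end Generators

/-- Let `G` be a group generated by a finite set `S` such that every subset of `S`
with at most 4 elements generates a subgroup of exponent 3.  Then `G` has exponent 3. -/
theorem stmt_9 {G : Type*} [Group G] (S : Finset G)
    (hS : Subgroup.closure (S : Set G) = ⊤)
    (h4 : ∀ T ⊆ S, T.card ≤ 4 → ∀ x ∈ Subgroup.closure (T : Set G), x ^ 3 = 1) :
    ∀ x : G, x ^ 3 = 1 := by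
  classical
  have hlocal : ∀ s ∈ S, ∀ t ∈ S, ∀ u ∈ S, ∀ v ∈ S, ∃ K : Subgroup G,
      (∀ k : K, k ^ 3 = 1) ∧ s ∈ K ∧ t ∈ K ∧ u ∈ K ∧ v ∈ K := by
    intro s hs t ht u hu v hv
    refine ⟨closure ({s, t, u, v} : Finset G), fun k => Subtype.ext ?_, ?_, ?_, ?_, ?_⟩
    · simpa using h4 _ (by simp [Finset.insert_subset_iff, *]) Finset.card_le_four k k.2
    all_goals exact Subgroup.subset_closure (by simp)
  have hc := commutatorElement_commutatorElement_mem_center_of_closure_eq_top hS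
    fun s hs t ht u hu v hv => by
      obtain ⟨K, hK, hs, ht, hu, hv⟩ := hlocal s hs t ht u hu v hv
      simpa [commutatorElement_def] using congrArg Subtype.val <|
        ExponentThree.commutatorElement_commutatorElement_commutatorElement_eq_one hK
          ⟨s, hs⟩ ⟨t, ht⟩ ⟨u, hu⟩ ⟨v, hv⟩
  have hengel := commutatorElement_commutatorElement_self_eq_one_of_closure_eq_top hS hc
    (fun s hs t ht => by
      obtain ⟨K, hK, hs, ht, -⟩ := hlocal s hs t ht t ht t ht
      simpa [commutatorElement_def] using congrArg Subtype.val <|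
        ExponentThree.commutatorElement_commutatorElement_self_eq_one hK ⟨s, hs⟩ ⟨t, ht⟩)
    (fun s hs t ht u hu => by
      obtain ⟨K, hK, hs, ht, hu, -⟩ := hlocal s hs t ht u hu u hu
      simpa [commutatorElement_def] using congrArg Subtype.val <|
        ExponentThree.commutatorElement_commutatorElement_mul_swap_eq_one hK
          ⟨s, hs⟩ ⟨t, ht⟩ ⟨u, hu⟩)
  exact pow_three_eq_one_of_closure_eq_top hS hengel fun s hs => by
    obtain ⟨K, hK, hs, -⟩ := hlocal s hs s hs s hs s hs
    simpa using congrArg Subtype.val (hK ⟨s, hs⟩)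
end

section
/- In a group G of exponent 3, every triple commutator ((a,b),c) is central and ((a,b),(c,d)) = 1 for all a,b,c,d ∈ G; moreover ((a,b),c) is alternating: it transforms by the sign character under permutations of a, b, c. -/
open scoped commutatorElement

/-!
In exponent 3 we have `x y x = y⁻¹ x⁻¹ y⁻¹`, so an element commutes with each of its conjugates and
hence any two conjugates of `x` commute: the normal closure `A` of `x` is abelian. Since
`a (s⁻¹ a s) (s a s⁻¹) = (a s⁻¹)³ = 1`, every `s ∈ G` acts on `A` with `1 + s + s⁻¹ = 0`. A linear
relation between the conjugates `w x w⁻¹` that follows from this gives the key identity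
`⁅⁅x, b⁆, c⁆ = ⁅x, ⁅c, b⁆⁆`. With the 2-Engel inversion rules `⁅x, y⁻¹⁆ = ⁅x, y⁆⁻¹ = ⁅x⁻¹, y⁆` it
makes `⁅⁅a, b⁆, c⁆` alternating and shows that `w = ⁅⁅a, b⁆, ⁅c, d⁆⁆` is its own inverse, so `w = 1`
as `w³ = 1`. Finally `⁅⁅⁅a, b⁆, c⁆, g⁆ = ⁅⁅a, b⁆, ⁅g, c⁆⁆ = 1` makes `⁅⁅a, b⁆, c⁆` central.
-/

theorem map_mul_add_map_commutatorElement {G M : Type*} [Group G] [AddCommGroup M] {f : G → M}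
    (hf : ∀ s w, f w + f (s⁻¹ * w) + f (s * w) = 0) (b c : G) :
    f (c * b) + f ⁅c, b⁆ = f b + f c := by
  have triple : ∀ w, f w + f w + f w = 0 := fun w => by simpa using hf 1 w
  -- six instances of `hf` whose signed sum is the claim up to multiples of `3`
  have h1 := hf c b⁻¹
  have h2 := hf (c * b⁻¹ * c⁻¹) c
  have h3 := hf (b⁻¹ * c⁻¹ * c⁻¹) b⁻¹
  have h4 := hf b 1
  have h5 := hf (b⁻¹ * c⁻¹) (c⁻¹ * b⁻¹)
  have h6 := hf c c
  simp only [commutatorElement_def, mul_assoc, mul_inv_rev, inv_inv, mul_one,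
    mul_inv_cancel, inv_mul_cancel] at h1 h2 h3 h4 h5 h6 ⊢
  linear_combination (norm := abel) h2 + h5 + h6 - h1 - h3 - h4 + triple b⁻¹ - triple c

section Commute

variable {G : Type*} [Group G] {x y : G}

theorem commutatorElement_inv_right_of_commute (h : Commute ⁅x, y⁆ y) : ⁅x, y⁻¹⁆ = ⁅x, y⁆⁻¹ := by
  calc ⁅x, y⁻¹⁆ = y⁻¹ * ⁅x, y⁆⁻¹ * y := by simp only [commutatorElement_def]; group
    _ = ⁅x, y⁆⁻¹ := h.inv_left.symm.inv_mul_cancel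

theorem commutatorElement_inv_left_of_commute (h : Commute ⁅x, y⁆ x) : ⁅x⁻¹, y⁆ = ⁅x, y⁆⁻¹ := by
  calc ⁅x⁻¹, y⁆ = x⁻¹ * ⁅x, y⁆⁻¹ * x := by simp only [commutatorElement_def]; group
    _ = ⁅x, y⁆⁻¹ := h.inv_left.symm.inv_mul_cancel

end Commute

namespace ExponentThree

variable {G : Type*} [Group G]

theorem mul_self_eq_inv (hexp : ∀ x : G, x ^ 3 = 1) (x : G) : x * x = x⁻¹ := by
  rw [← mul_eq_one_iff_eq_inv, ← pow_three', hexp]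

theorem mul_mul_self_eq (hexp : ∀ x : G, x ^ 3 = 1) (x y : G) : x * y * x = y⁻¹ * x⁻¹ * y⁻¹ := by
  rw [← mul_inv_rev, ← mul_inv_rev, ← mul_eq_one_iff_eq_inv, ← hexp (x * y), pow_three]
  group

theorem commute_conj_self (hexp : ∀ x : G, x ^ 3 = 1) (x g : G) : Commute x (g * x * g⁻¹) := by
  have hg : g⁻¹ * g⁻¹ = g := by rw [mul_self_eq_inv hexp, inv_inv]
  calc x * (g * x * g⁻¹) = x * g * x * g⁻¹ := by group
    _ = g⁻¹ * x⁻¹ * (g⁻¹ * g⁻¹) := by rw [mul_mul_self_eq hexp]; group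
    _ = g * g * x⁻¹ * g := by rw [hg, mul_self_eq_inv hexp]
    _ = g * (x * g⁻¹ * x) := by rw [mul_mul_self_eq hexp, inv_inv]; group
    _ = g * x * g⁻¹ * x := by group

theorem commute_conj_conj (hexp : ∀ x : G, x ^ 3 = 1) (x g h : G) :
    Commute (g * x * g⁻¹) (h * x * h⁻¹) := by
  simpa [mul_assoc] using (commute_conj_self hexp x (g⁻¹ * h)).map (MulAut.conj g)

theorem commute_commutatorElement_right (hexp : ∀ x : G, x ^ 3 = 1) (x y : G) :
    Commute ⁅x, y⁆ y := by
  rw [commutatorElement_def]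
  exact (commute_conj_self hexp y x).symm.mul_left (Commute.refl y).inv_left

theorem commute_commutatorElement_left (hexp : ∀ x : G, x ^ 3 = 1) (x y : G) :
    Commute ⁅x, y⁆ x := by
  rw [← commutatorElement_inv]
  exact (commute_commutatorElement_right hexp y x).inv_left

theorem commutatorElement_inv_right (hexp : ∀ x : G, x ^ 3 = 1) (x y : G) :
    ⁅x, y⁻¹⁆ = ⁅x, y⁆⁻¹ :=
  commutatorElement_inv_right_of_commute (commute_commutatorElement_right hexp x y)

theorem commutatorElement_inv_left (hexp : ∀ x : G, x ^ 3 = 1) (x y : G) :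
    ⁅x⁻¹, y⁆ = ⁅x, y⁆⁻¹ :=
  commutatorElement_inv_left_of_commute (commute_commutatorElement_left hexp x y)

theorem mul_conj_inv_mul_conj (hexp : ∀ x : G, x ^ 3 = 1) (a s : G) :
    a * (s⁻¹ * a * s) * (s * a * s⁻¹) = 1 := by
  calc a * (s⁻¹ * a * s) * (s * a * s⁻¹) = a * s⁻¹ * a * (s * s) * a * s⁻¹ := by group
    _ = (a * s⁻¹) ^ 3 := by rw [mul_self_eq_inv hexp, pow_three]; group
    _ = 1 := hexp _

open scoped IsMulCommutative in
theorem commutatorElement_commutatorElement (hexp : ∀ x : G, x ^ 3 = 1) (x b c : G) :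
    ⁅⁅x, b⁆, c⁆ = ⁅x, ⁅c, b⁆⁆ := by
  let A := Subgroup.closure (Set.range fun g : G => g * x * g⁻¹)
  have : IsMulCommutative A := Subgroup.isMulCommutative_closure <| by
    rintro _ ⟨g, rfl⟩ _ ⟨h, rfl⟩
    exact commute_conj_conj hexp x g h
  let ξ : G → Additive A := fun w => .ofMul ⟨w * x * w⁻¹, Subgroup.subset_closure ⟨w, rfl⟩⟩
  have hξ : ∀ s w, ξ w + ξ (s⁻¹ * w) + ξ (s * w) = 0 := by
    intro s w
    apply Subtype.ext
    show w * x * w⁻¹ * (s⁻¹ * w * x * (s⁻¹ * w)⁻¹) * (s * w * x * (s * w)⁻¹) = 1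
    simpa [mul_assoc] using mul_conj_inv_mul_conj hexp (w * x * w⁻¹) s
  have key : -ξ b + ξ (c * b) + -ξ c = -ξ ⁅c, b⁆ := by
    linear_combination (norm := abel) map_mul_add_map_commutatorElement hξ b c
  calc ⁅⁅x, b⁆, c⁆ = x * ((b * x * b⁻¹)⁻¹ * (c * b * x * (c * b)⁻¹) * (c * x * c⁻¹)⁻¹) := by
        simp only [commutatorElement_def]; group
    _ = x * (⁅c, b⁆ * x * ⁅c, b⁆⁻¹)⁻¹ := congrArg (x * ·) (congrArg Subtype.val key)
    _ = ⁅x, ⁅c, b⁆⁆ := by simp only [commutatorElement_def]; group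

theorem commutatorElement_commutatorElement_swap_left (hexp : ∀ x : G, x ^ 3 = 1) (a b c : G) :
    ⁅⁅a, b⁆, c⁆ = ⁅⁅b, a⁆, c⁆⁻¹ := by
  rw [← commutatorElement_inv_left hexp, commutatorElement_inv]

theorem commutatorElement_commutatorElement_swap_right (hexp : ∀ x : G, x ^ 3 = 1) (a b c : G) :
    ⁅⁅a, b⁆, c⁆ = ⁅⁅a, c⁆, b⁆⁻¹ := by
  rw [commutatorElement_commutatorElement hexp, commutatorElement_commutatorElement hexp,
    ← commutatorElement_inv b c, commutatorElement_inv_right hexp]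

theorem commutatorElement_commutatorElement_cycle (hexp : ∀ x : G, x ^ 3 = 1) (a b c : G) :
    ⁅⁅a, b⁆, c⁆ = ⁅⁅b, c⁆, a⁆ := by
  rw [commutatorElement_commutatorElement_swap_left hexp,
    commutatorElement_commutatorElement_swap_right hexp, inv_inv]

theorem commutatorElement_commutatorElement_commutatorElement (hexp : ∀ x : G, x ^ 3 = 1)
    (a b c d : G) : ⁅⁅a, b⁆, ⁅c, d⁆⁆ = ⁅⁅b, d⁆, ⁅a, c⁆⁆ := by
  rw [commutatorElement_commutatorElement_cycle hexp, ← commutatorElement_commutatorElement hexp,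
    commutatorElement_commutatorElement hexp]

theorem commutatorElement_commutatorElement_commutatorElement_eq_one_s11 (hexp : ∀ x : G, x ^ 3 = 1)
    (a b c d : G) : ⁅⁅a, b⁆, ⁅c, d⁆⁆ = 1 := by
  set w := ⁅⁅a, b⁆, ⁅c, d⁆⁆
  have hw : w = w⁻¹ := calc
    w = ⁅⁅d, c⁆, ⁅b, a⁆⁆ := (commutatorElement_commutatorElement_commutatorElement hexp a b c d).trans
        (commutatorElement_commutatorElement_commutatorElement hexp b d a c)
    _ = ⁅⁅c, d⁆, ⁅a, b⁆⁆ := by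
        rw [← commutatorElement_inv c d, ← commutatorElement_inv a b, commutatorElement_inv_left hexp,
          commutatorElement_inv_right hexp, inv_inv]
    _ = w⁻¹ := (commutatorElement_inv _ _).symm
  have hww : w * w = 1 := by
    nth_rw 1 [hw]
    exact inv_mul_cancel w
  calc w = w * (w * w) := by rw [hww, mul_one]
    _ = 1 := by rw [← pow_three, hexp]

theorem commutatorElement_commutatorElement_mem_center (hexp : ∀ x : G, x ^ 3 = 1) (a b c : G) :
    ⁅⁅a, b⁆, c⁆ ∈ Subgroup.center G := by
  refine Subgroup.mem_center_iff.mpr fun g => ?_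
  have hg : ⁅⁅⁅a, b⁆, c⁆, g⁆ = 1 := by
    rw [commutatorElement_commutatorElement hexp,
      commutatorElement_commutatorElement_commutatorElement_eq_one_s11 hexp]
  exact (commutatorElement_eq_one_iff_commute.mp hg).symm.eq

end ExponentThree

open ExponentThree

/-- In a group of exponent 3 every triple commutator `((a,b),c)` is central,
`((a,b),(c,d)) = 1` for all `a, b, c, d`, and `((a,b),c)` is alternating: it transforms by the
sign character under permutations of `a, b, c`. -/
theorem stmt_11 {G : Type*} [Group G] (hexp : ∀ x : G, x ^ 3 = 1) :
    ∀ a b c d : G,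
      ⁅⁅a, b⁆, c⁆ ∈ Subgroup.center G ∧
      ⁅⁅a, b⁆, ⁅c, d⁆⁆ = 1 ∧
      ⁅⁅a, b⁆, c⁆ = ⁅⁅b, c⁆, a⁆ ∧
      ⁅⁅a, b⁆, c⁆ = ⁅⁅c, a⁆, b⁆ ∧
      ⁅⁅a, b⁆, c⁆ = ⁅⁅b, a⁆, c⁆⁻¹ := fun a b c d =>
  ⟨commutatorElement_commutatorElement_mem_center hexp a b c,
    commutatorElement_commutatorElement_commutatorElement_eq_one_s11 hexp a b c d,
    commutatorElement_commutatorElement_cycle hexp a b c,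
    (commutatorElement_commutatorElement_cycle hexp c a b).symm,
    commutatorElement_commutatorElement_swap_left hexp a b c⟩
end

section
/- Let G' be a group containing a finite subgroup G of exponent 3 and an element r such that G' is generated by G and r. If b ∈ G and both (br)^3 = 1 and (b^{-1}r)^3 = 1 hold, then the conjugates r^b = brb^{-1}, r^{b^{-1}} = b^{-1}rb, and r pairwise commute and satisfy r^b · r^{b^{-1}} · r = 1. -/
/-- Let `G'` be a group containing a finite subgroup `G` of exponent 3 and an
element `r` such that `G'` is generated by `G` and `r`.  If `b ∈ G` and both `(br)^3 = 1` and
`(b⁻¹r)^3 = 1`, then the conjugates `r^b = brb⁻¹`, `r^{b⁻¹} = b⁻¹rb` and `r` pairwise commute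
and satisfy `r^b · r^{b⁻¹} · r = 1`. -/
theorem stmt_12 {G' : Type*} [Group G'] (G : Subgroup G') [Finite G]
    (hexp : ∀ g ∈ G, g ^ 3 = 1) (r : G')
    (hgen : Subgroup.closure ((G : Set G') ∪ {r}) = ⊤)
    (b : G') (hb : b ∈ G) (h1 : (b * r) ^ 3 = 1) (h2 : (b⁻¹ * r) ^ 3 = 1) :
    Commute (b * r * b⁻¹) (b⁻¹ * r * b) ∧
    Commute (b * r * b⁻¹) r ∧
    Commute (b⁻¹ * r * b) r ∧
    (b * r * b⁻¹) * (b⁻¹ * r * b) * r = 1 := by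
  have hb3 : b * (b * b) = 1 := by
    have := hexp b hb
    rw [pow_succ, pow_two] at this
    rw [← mul_assoc]; exact this
  have hbb : b⁻¹ * b⁻¹ = b := by
    rw [← mul_inv_rev]; exact inv_eq_of_mul_eq_one_left hb3
  have hbb2 : b * b = b⁻¹ := (inv_eq_of_mul_eq_one_right hb3).symm
  set x := b * r * b⁻¹ with hx
  set y := b⁻¹ * r * b with hy
  have hxyr : x * y * r = 1 := by
    calc x * y * r = b * r * (b⁻¹ * b⁻¹) * r * (b * r) := by
          rw [hx, hy]; group
      _ = b * r * b * r * (b * r) := by rw [hbb]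
      _ = (b * r) ^ 3 := by rw [pow_succ, pow_two]; group
      _ = 1 := h1
  have hyxr : y * x * r = 1 := by
    calc y * x * r = b⁻¹ * r * (b * b) * r * (b⁻¹ * r) := by
          rw [hx, hy]; group
      _ = b⁻¹ * r * b⁻¹ * r * (b⁻¹ * r) := by rw [hbb2]
      _ = (b⁻¹ * r) ^ 3 := by rw [pow_succ, pow_two]; group
      _ = 1 := h2
  have hxy : x * y = r⁻¹ := by
    rw [← mul_left_inj r, inv_mul_cancel]; exact hxyr
  have hyx : y * x = r⁻¹ := by
    rw [← mul_left_inj r, inv_mul_cancel]; exact hyxr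
  have hc : Commute x y := by
    unfold Commute SemiconjBy; rw [hxy, hyx]
  have hr : r = (x * y)⁻¹ := by rw [hxy, inv_inv]
  have hcx : Commute x r := by
    rw [hr]; exact ((Commute.refl x).mul_right hc).inv_right
  have hcy : Commute y r := by
    rw [hr]; exact (hc.symm.mul_right (Commute.refl y)).inv_right
  exact ⟨hc, hcx, hcy, hxyr⟩
end

section
/- The free Burnside group B(n,3) of exponent 3 has the property that for any elements a, b, c, the triple commutator ((a,b),c) is central, and ((x,r),x) = 1 for all x, r ∈ B(n,3). -/
open scoped commutatorElement

/-- The free Burnside group `B(n,3)`: the quotient of the free group on `n` generators by the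
normal subgroup generated by all cubes. -/
abbrev Burnside (n : ℕ) : Type :=
  PresentedGroup (Set.range fun x : FreeGroup (Fin n) => x ^ 3)

/-!
In a group of exponent 3 every element commutes with all of its conjugates, so the normal
closure `N` of an element `a` is abelian of exponent 3, i.e. a module over `ZMod 3` on which `G`
acts by conjugation. For `u ∈ N` the commutator `⁅u, g⁆` corresponds to `(1 - ρ g) u`, and
`(ρ g - 1)² = 0` says that `⁅u, g⁆` commutes with `g`. In characteristic 3, square-zero
operators `ρ g - 1` pairwise anticommute, and the product of any three of them vanishes; applied
to `a` this gives `⁅⁅⁅a, b⁆, c⁆, d⁆ = 1`.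
-/

section UnipotentRepresentation

variable {G R : Type*} [Group G] [Ring R] (ρ : G →* R)

lemma MonoidHom.map_mul_sub_one (p q : G) :
    ρ (p * q) - 1 = (ρ p - 1) + (ρ q - 1) + (ρ p - 1) * (ρ q - 1) := by
  rw [map_mul]; noncomm_ring

lemma MonoidHom.map_inv_sub_one {g : G} (hg : (ρ g - 1) * (ρ g - 1) = 0) :
    ρ g⁻¹ - 1 = -(ρ g - 1) :=
  calc ρ g⁻¹ - 1
      = ρ g⁻¹ * ((ρ g - 1) * (ρ g - 1)) - (ρ g - 1) + (1 - ρ g⁻¹ * ρ g) * (ρ g - 2) := by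
        noncomm_ring
    _ = -(ρ g - 1) := by rw [hg, ← map_mul, inv_mul_cancel, map_one]; noncomm_ring

lemma mul_add_mul_eq_zero_of_mul_self_eq_zero {A B : R} (h3 : (3 : R) = 0) (hA : A * A = 0)
    (hplus : (A + B + A * B) * (A + B + A * B) = 0)
    (hminus : (A - B - A * B) * (A - B - A * B) = 0) :
    A * B + B * A = 0 := by
  have hsum : A * B + B * A + A * B * A = 0 :=
    calc A * B + B * A + A * B * A
        = 3 * (A * B + B * A + A * B * A) - (A + B + A * B) * (A + B + A * B)
          + (A - B - A * B) * (A - B - A * B) + 2 * (A * A) * B := by noncomm_ring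
      _ = 0 := by rw [h3, hplus, hminus, hA]; noncomm_ring
  have hABA : A * B * A = 0 :=
    calc A * B * A = A * (A * B + B * A + A * B * A) - A * A * B - A * A * (B * A) := by
          noncomm_ring
      _ = 0 := by rw [hsum, hA]; noncomm_ring
  rwa [hABA, add_zero] at hsum

lemma MonoidHom.sub_one_anticomm (h3 : (3 : R) = 0)
    (hρ : ∀ g, (ρ g - 1) * (ρ g - 1) = 0) (p q : G) :
    (ρ p - 1) * (ρ q - 1) + (ρ q - 1) * (ρ p - 1) = 0 := by
  refine mul_add_mul_eq_zero_of_mul_self_eq_zero h3 (hρ p) ?_ ?_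
  · rw [← ρ.map_mul_sub_one]
    exact hρ (p * q)
  · have h := hρ (p * q⁻¹)
    rw [ρ.map_mul_sub_one, ρ.map_inv_sub_one (hρ q)] at h
    simpa only [sub_eq_add_neg, mul_neg] using h

lemma MonoidHom.sub_one_mul_sub_one_mul_sub_one_eq_zero_s14 (h3 : (3 : R) = 0)
    (hρ : ∀ g, (ρ g - 1) * (ρ g - 1) = 0) (b c d : G) :
    (ρ b - 1) * (ρ c - 1) * (ρ d - 1) = 0 := by
  set A := ρ b - 1
  set B := ρ c - 1
  set C := ρ d - 1
  have hAB : A * B + B * A = 0 := ρ.sub_one_anticomm h3 hρ b c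
  have hAC : A * C + C * A = 0 := ρ.sub_one_anticomm h3 hρ b d
  have hABC : A * (B + C + B * C) + (B + C + B * C) * A = 0 := by
    rw [← ρ.map_mul_sub_one]
    exact ρ.sub_one_anticomm h3 hρ b (c * d)
  calc A * B * C
      = 3 * (A * B * C) - (A * (B + C + B * C) + (B + C + B * C) * A) + (A * B + B * A)
        + (A * C + C * A) + B * (A * C + C * A) - (A * B + B * A) * C := by noncomm_ring
    _ = 0 := by rw [h3, hABC, hAB, hAC]; noncomm_ring

end UnipotentRepresentation

section ExponentThree

variable {G : Type*} [Group G]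

lemma mul_self_eq_inv_of_pow_three_eq_one {g : G} (h : g ^ 3 = 1) : g * g = g⁻¹ :=
  eq_inv_of_mul_eq_one_left (by rwa [← pow_three'])

lemma mul_mul_self_eq_of_pow_three_eq_one (h3 : ∀ g : G, g ^ 3 = 1) (x y : G) :
    x * y * x = y⁻¹ * x⁻¹ * y⁻¹ := by
  have hxy : x * y * x * (y * x * y) = 1 := by rw [← h3 (x * y), pow_three']; group
  rw [eq_inv_of_mul_eq_one_left hxy]; group

lemma commute_conj_of_pow_three_eq_one (h3 : ∀ g : G, g ^ 3 = 1) (x y : G) :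
    Commute x (y * x * y⁻¹) := by
  have hy : y⁻¹ * y⁻¹ = y := by rw [mul_self_eq_inv_of_pow_three_eq_one (h3 y⁻¹), inv_inv]
  have hxy : x * y⁻¹ * x = y * x⁻¹ * y := by
    rw [mul_mul_self_eq_of_pow_three_eq_one h3, inv_inv]
  calc x * (y * x * y⁻¹)
      = x * y * x * y⁻¹ := by group
    _ = y⁻¹ * x⁻¹ * (y⁻¹ * y⁻¹) := by rw [mul_mul_self_eq_of_pow_three_eq_one h3]; group
    _ = y * y * x⁻¹ * y := by rw [hy, mul_self_eq_inv_of_pow_three_eq_one (h3 y)]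
    _ = y * (x * y⁻¹ * x) := by rw [hxy]; group
    _ = y * x * y⁻¹ * x := by group

lemma commutatorElement_commutatorElement_self_eq_one
    (hconj : ∀ x y : G, Commute x (y * x * y⁻¹)) (x y : G) : ⁅⁅x, y⁆, x⁆ = 1 := by
  have hxy : ⁅x, y⁆ = x * (y * x * y⁻¹)⁻¹ := by rw [commutatorElement_def]; group
  rw [commutatorElement_eq_one_iff_commute, hxy]
  exact (Commute.refl x).mul_left (hconj x y).inv_right.symm

end ExponentThree

section ConjRepresentation

open scoped IsMulCommutative

variable {G : Type*} [Group G]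

lemma isMulCommutative_normalClosure_singleton
    (hconj : ∀ x y : G, Commute x (y * x * y⁻¹)) (a : G) :
    IsMulCommutative (Subgroup.normalClosure {a}) := by
  refine Subgroup.isMulCommutative_closure fun x hx y hy => ?_
  simp only [Group.mem_conjugatesOfSet_iff, Set.mem_singleton_iff, exists_eq_left,
    isConj_iff] at hx hy
  obtain ⟨g, rfl⟩ := hx
  obtain ⟨k, rfl⟩ := hy
  have h := ((hconj a (g⁻¹ * k)).map (MulAut.conj g)).eq
  simp only [MulAut.conj_apply] at h
  simpa [mul_assoc] using h

lemma Module.End.three_eq_zero_of_pow_three_eq_one {M : Type*} [CommGroup M]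
    (h3 : ∀ m : M, m ^ 3 = 1) : (3 : Module.End ℤ (Additive M)) = 0 := by
  ext x
  change 3 • x = 0
  rw [← ofMul_toMul x, ← ofMul_pow, h3, ofMul_one]

variable (N : Subgroup G) [N.Normal] [IsMulCommutative N]

def conjRepresentation : G →* Module.End ℤ (Additive N) :=
  (Representation.ofMulDistribMulAction (ConjAct G) N).comp ConjAct.toConjAct.toMonoidHom

lemma coe_toMul_one_sub_conjRepresentation_apply (g : G) (x : Additive N) :
    ((1 - conjRepresentation N g) x).toMul = ⁅(x.toMul : G), g⁆ := by
  simp only [conjRepresentation, MonoidHom.comp_apply, LinearMap.sub_apply,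
    Representation.ofMulDistribMulAction_apply_apply, Module.End.one_apply, toMul_sub,
    toMul_ofMul, div_eq_mul_inv, Subgroup.coe_mul, InvMemClass.coe_inv, commutatorElement_def]
  change _ * (g * _ * g⁻¹)⁻¹ = _
  group

lemma conjRepresentation_sub_one_mul_self (hconj : ∀ x y : G, Commute x (y * x * y⁻¹))
    (g : G) : (conjRepresentation N g - 1) * (conjRepresentation N g - 1) = 0 := by
  rw [show (conjRepresentation N g - 1) * (conjRepresentation N g - 1)
      = (1 - conjRepresentation N g) * (1 - conjRepresentation N g) by noncomm_ring]
  refine LinearMap.ext fun x => Additive.toMul.injective (Subtype.ext ?_)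
  rw [Module.End.mul_apply, coe_toMul_one_sub_conjRepresentation_apply,
    coe_toMul_one_sub_conjRepresentation_apply, LinearMap.zero_apply, toMul_zero,
    OneMemClass.coe_one, commutatorElement_eq_one_iff_commute, commutatorElement_def]
  exact (hconj g _).symm.mul_left (Commute.refl g).inv_left

end ConjRepresentation

open scoped IsMulCommutative in
lemma commutatorElement_commutatorElement_commutatorElement_eq_one_of_pow_three_eq_one
    {G : Type*} [Group G] (h3 : ∀ g : G, g ^ 3 = 1) (a b c d : G) : ⁅⁅⁅a, b⁆, c⁆, d⁆ = 1 := by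
  have hconj := commute_conj_of_pow_three_eq_one h3
  let N := Subgroup.normalClosure ({a} : Set G)
  have := isMulCommutative_normalClosure_singleton hconj a
  let ρ := conjRepresentation N
  have hρ : (1 - ρ d) * (1 - ρ c) * (1 - ρ b) = 0 := by
    rw [show (1 - ρ d) * (1 - ρ c) * (1 - ρ b) = -((ρ d - 1) * (ρ c - 1) * (ρ b - 1)) by
        noncomm_ring,
      ρ.sub_one_mul_sub_one_mul_sub_one_eq_zero_s14
        (Module.End.three_eq_zero_of_pow_three_eq_one fun m => Subtype.ext (h3 m))
        (conjRepresentation_sub_one_mul_self N hconj), neg_zero]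
  have h := congr((($hρ (Additive.ofMul ⟨a, Subgroup.subset_normalClosure rfl⟩)).toMul : G))
  simpa only [Module.End.mul_apply, ρ, coe_toMul_one_sub_conjRepresentation_apply, toMul_ofMul,
    LinearMap.zero_apply, toMul_zero, OneMemClass.coe_one] using h

lemma PresentedGroup.pow_eq_one_of_range_pow {α : Type*} (n : ℕ)
    (g : PresentedGroup (Set.range fun x : FreeGroup α => x ^ n)) : g ^ n = 1 := by
  obtain ⟨w, rfl⟩ := PresentedGroup.mk_surjective _ g
  rw [← map_pow]
  exact PresentedGroup.one_of_mem ⟨w, rfl⟩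

/-- In the free Burnside group `B(n,3)` of exponent 3, for any elements
`a, b, c` the triple commutator `((a,b),c)` is central, and `((x,r),x) = 1` for all `x, r`. -/
theorem stmt_14 (n : ℕ) :
    (∀ a b c : Burnside n, ⁅⁅a, b⁆, c⁆ ∈ Subgroup.center (Burnside n)) ∧
    (∀ x r : Burnside n, ⁅⁅x, r⁆, x⁆ = 1) := by
  have h3 : ∀ g : Burnside n, g ^ 3 = 1 := PresentedGroup.pow_eq_one_of_range_pow 3
  refine ⟨fun a b c => Subgroup.mem_center_iff.mpr fun d => ?_,
    commutatorElement_commutatorElement_self_eq_one (commute_conj_of_pow_three_eq_one h3)⟩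
  have hcomm := commutatorElement_eq_one_iff_commute.mp
    (commutatorElement_commutatorElement_commutatorElement_eq_one_of_pow_three_eq_one h3 a b c d)
  exact hcomm.symm.eq
end
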